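/- Let S be a birestriction monoid and m : S → S a map. Then the identities m(a) a^* = a and m(a b^*) = m(a) hold for all a, b ∈ S if and only if for every a ∈ S, m(a) is the maximum element of the σ-class of a with respect to the natural partial order. (Hence F-birestriction monoids in the enriched signature (·, ^*, ^+, m, 1) form a variety of algebras.) -/
import Mathlib


/-- A birestriction semigroup: a semigroup with unary operations `bstar` (`^*`) and
`bplus` (`^+`) satisfying the defining identities. -/
class BirSgp (S : Type*) extends Semigroup S where
  bstar : S → S
  bplus : S → S
  mul_bstar : ∀ x : S, x * bstar x = x
  bstar_comm : ∀ x y : S, bstar x * bstar y = bstar y * bstar x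
  bstar_mul_bstar : ∀ x y : S, bstar (x * bstar y) = bstar x * bstar y
  bstar_mul : ∀ x y : S, bstar x * y = y * bstar (x * y)
  bplus_mul : ∀ x : S, bplus x * x = x
  bplus_comm : ∀ x y : S, bplus x * bplus y = bplus y * bplus x
  bplus_mul_bplus : ∀ x y : S, bplus (bplus x * y) = bplus x * bplus y
  mul_bplus : ∀ x y : S, x * bplus y = bplus (x * y) * x
  bstar_bplus : ∀ x : S, bstar (bplus x) = bplus x
  bplus_bstar : ∀ x : S, bplus (bstar x) = bstar x

/-- A birestriction monoid: a birestriction semigroup with an identity element. -/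
class BirMon (S : Type*) extends Monoid S, BirSgp S

open BirSgp

/-- The set of projections `P(S) = {s^* : s ∈ S}`. -/
def proj (S : Type*) [BirSgp S] : Set S := Set.range (bstar : S → S)

/-- The natural partial order: `s ≤ t` iff `s = e * t` for some projection `e`. -/
def nle {S : Type*} [BirSgp S] (s t : S) : Prop := ∃ e ∈ proj S, s = e * t

/-- The relation σ: `s σ t` iff `e * s = e * t` for some projection `e`. -/
def sig {S : Type*} [BirSgp S] (s t : S) : Prop := ∃ e ∈ proj S, e * s = e * t

/-- A birestriction semigroup is proper. -/
def IsProper (S : Type*) [BirSgp S] : Prop :=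
  (∀ s t : S, bstar s = bstar t → sig s t → s = t) ∧
  (∀ s t : S, bplus s = bplus t → sig s t → s = t)

section Aux

variable {S : Type*} [BirMon S]

lemma bstar_one' : bstar (1 : S) = 1 := by
  have h := mul_bstar (1 : S); simpa using h

lemma bstar_bstar (x : S) : bstar (bstar x) = bstar x := by
  have h := bstar_mul_bstar (1 : S) x
  simpa [bstar_one'] using h

lemma one_mem_proj : (1 : S) ∈ proj S := ⟨1, bstar_one'⟩

lemma proj_bstar {e : S} (he : e ∈ proj S) : bstar e = e := by
  obtain ⟨x, rfl⟩ := he; exact bstar_bstar x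

lemma proj_idem {e : S} (he : e ∈ proj S) : e * e = e := by
  conv_lhs => rw [← proj_bstar he]
  rw [proj_bstar he]  -- no-op safeguard
  calc e * e = e * bstar e := by rw [proj_bstar he]
    _ = e := mul_bstar e

lemma proj_bplus {e : S} (he : e ∈ proj S) : bplus e = e := by
  obtain ⟨x, rfl⟩ := he; exact bplus_bstar x

lemma bplus_mem_proj (x : S) : bplus x ∈ proj S := ⟨bplus x, bstar_bplus x⟩

lemma proj_mul_mem {e f : S} (he : e ∈ proj S) (hf : f ∈ proj S) : e * f ∈ proj S := by
  obtain ⟨x, rfl⟩ := he; obtain ⟨y, rfl⟩ := hf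
  exact ⟨x * bstar y, bstar_mul_bstar x y⟩

lemma proj_comm {e f : S} (he : e ∈ proj S) (hf : f ∈ proj S) : e * f = f * e := by
  obtain ⟨x, rfl⟩ := he; obtain ⟨y, rfl⟩ := hf
  exact bstar_comm x y

lemma sig_refl (a : S) : sig a a := ⟨1, one_mem_proj, rfl⟩

lemma sig_symm {a b : S} (h : sig a b) : sig b a := by
  obtain ⟨e, he, h⟩ := h; exact ⟨e, he, h.symm⟩

lemma sig_trans {a b c : S} (h1 : sig a b) (h2 : sig b c) : sig a c := by
  obtain ⟨e, he, h1⟩ := h1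
  obtain ⟨f, hf, h2⟩ := h2
  refine ⟨e * f, proj_mul_mem he hf, ?_⟩
  calc e * f * a = f * (e * a) := by rw [proj_comm he hf, mul_assoc]
    _ = f * (e * b) := by rw [h1]
    _ = e * (f * b) := by rw [← mul_assoc, ← mul_assoc, proj_comm hf he]
    _ = e * (f * c) := by rw [h2]
    _ = e * f * c := by rw [mul_assoc]

/-- `a σ (e * a)` for any projection `e`. -/
lemma sig_proj_mul {e : S} (he : e ∈ proj S) (a : S) : sig a (e * a) :=
  ⟨e, he, by rw [← mul_assoc, proj_idem he]⟩

/-- `a σ (a * f)` for any projection `f`. -/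
lemma sig_mul_proj {f : S} (hf : f ∈ proj S) (a : S) : sig a (a * f) := by
  have h : a * f = bplus (a * f) * a := by
    conv_lhs => rw [← proj_bplus hf]
    exact mul_bplus a f
  rw [h]
  exact sig_proj_mul (bplus_mem_proj _) a

/-- convert `s = t * f` (f projection) into `s = bplus s * t`. -/
lemma right_to_left {s t f : S} (hf : f ∈ proj S) (h : s = t * f) : s = bplus s * t := by
  have h2 : t * f = bplus (t * f) * t := by
    conv_lhs => rw [← proj_bplus hf]
    exact mul_bplus t f
  rw [h]
  exact h2

lemma nle_antisymm {s t : S} (h1 : nle s t) (h2 : nle t s) : s = t := by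
  obtain ⟨e, he, hs⟩ := h1
  obtain ⟨f, hf, ht⟩ := h2
  calc s = e * t := hs
    _ = e * (f * s) := by rw [ht]
    _ = e * (f * (e * t)) := by rw [hs]
    _ = e * f * e * t := by rw [mul_assoc, mul_assoc]
    _ = f * e * e * t := by rw [proj_comm he hf]
    _ = f * (e * e) * t := by rw [mul_assoc f]
    _ = f * e * t := by rw [proj_idem he]
    _ = f * (e * t) := by rw [mul_assoc]
    _ = f * s := by rw [hs]
    _ = t := ht.symm

end Aux

/-- the identities `m(a) a^* = a` and `m(a b^*) = m(a)` hold iff `m(a)`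
is the maximum of the σ-class of `a` for every `a` (so F-birestriction monoids form a
variety in the enriched signature). -/
theorem statement15 {S : Type*} [BirMon S] (m : S → S) :
    ((∀ a : S, m a * bstar a = a) ∧ (∀ a b : S, m (a * bstar b) = m a)) ↔
    (∀ a : S, sig a (m a) ∧ ∀ b : S, sig a b → nle b (m a)) := by
  constructor
  · rintro ⟨h1, h2⟩
    -- first: m respects σ: if e * a = e * b then m a = m b
    have key : ∀ a b : S, sig a b → m a = m b := by
      rintro a b ⟨e, ⟨x, rfl⟩, hab⟩
      have ha : bstar x * a = a * bstar (x * a) := bstar_mul x a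
      have hb : bstar x * b = b * bstar (x * b) := bstar_mul x b
      have : m (a * bstar (x * a)) = m (b * bstar (x * b)) := by
        rw [← ha, ← hb, hab]
      simpa [h2] using this
    -- a = bplus a * m a
    have ha' : ∀ a : S, a = bplus a * m a := fun a =>
      right_to_left ⟨a, rfl⟩ (h1 a).symm
    intro a
    constructor
    · exact ⟨bplus a, bplus_mem_proj a, by rw [← ha' a, bplus_mul]⟩
    · intro b hab
      have hmb : m a = m b := key a b hab
      exact ⟨bplus b, bplus_mem_proj b, by rw [hmb]; exact ha' b⟩
  · intro h
    have h1 : ∀ a : S, m a * bstar a = a := by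
      intro a
      obtain ⟨e, he, ha⟩ := (h a).2 a (sig_refl a)
      obtain ⟨x, rfl⟩ := he
      -- a = bstar x * m a = m a * bstar (x * m a)
      have ha2 : a = m a * bstar (x * m a) := ha.trans (bstar_mul x (m a))
      have hb : bstar a = bstar (m a) * bstar (x * m a) := by
        conv_lhs => rw [ha2]
        exact bstar_mul_bstar _ _
      rw [hb, ← mul_assoc, mul_bstar]
      exact ha2.symm
    refine ⟨h1, ?_⟩
    intro a b
    have hsig : sig a (a * bstar b) := sig_mul_proj ⟨b, rfl⟩ a
    have n1 : nle (m (a * bstar b)) (m a) :=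
      (h a).2 _ (sig_trans hsig (h (a * bstar b)).1)
    have n2 : nle (m a) (m (a * bstar b)) :=
      (h (a * bstar b)).2 _ (sig_trans (sig_symm hsig) (h a).1)
    exact nle_antisymm n1 n2
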